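/- Every nonempty fiber of the Wolff state map has the same size: let S₁,…,S_{n−k} be a basis of a subspace S ≤ V = (𝔽₂²)ⁿ and 0 ≤ i ≤ n. For every v in the image fᵢ(S^⊥), the fiber C_v = {P ∈ S^⊥ : fᵢ(P) = v} has cardinality |Cᵢᵖ| · |Cᵢᶠ|; consequently |S^⊥| = Σ_{v ∈ fᵢ(S^⊥)} |C_v| = |fᵢ(S^⊥)| · |Cᵢᵖ| · |Cᵢᶠ|. -/

import Mathlib

/-- `V = (𝔽₂²)ⁿ`, the additive group underlying the effective Pauli group `Gₙ`. -/
abbrev PV (n : ℕ) := Fin n → ZMod 2 × ZMod 2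

/-- The symplectic form `ω(v,w) = Σᵢ (aᵢb′ᵢ + a′ᵢbᵢ)` over `𝔽₂`. -/
def sympOmega {n : ℕ} (v w : PV n) : ZMod 2 :=
  ∑ i, ((v i).1 * (w i).2 + (w i).1 * (v i).2)

lemma sympOmega_add_left {n : ℕ} (a b w : PV n) :
    sympOmega (a + b) w = sympOmega a w + sympOmega b w := by
  unfold sympOmega
  rw [← Finset.sum_add_distrib]
  refine Finset.sum_congr rfl fun i _ => ?_
  simp [Prod.fst_add, Prod.snd_add, add_mul, mul_add]
  ring

lemma sympOmega_smul_left {n : ℕ} (c : ZMod 2) (a w : PV n) :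
    sympOmega (c • a) w = c * sympOmega a w := by
  unfold sympOmega
  rw [Finset.mul_sum]
  refine Finset.sum_congr rfl fun i _ => ?_
  simp [Prod.smul_fst, Prod.smul_snd, smul_eq_mul]
  ring

/-- The symplectic orthogonal `S^⊥ = {P ∈ V : ω(P,Q) = 0 for all Q ∈ S}`. -/
def sPerp {n : ℕ} (S : Submodule (ZMod 2) (PV n)) : Submodule (ZMod 2) (PV n) where
  carrier := {P | ∀ Q ∈ S, sympOmega P Q = 0}
  add_mem' := by
    intro a b ha hb Q hQ
    rw [sympOmega_add_left, ha Q hQ, hb Q hQ, add_zero]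
  zero_mem' := by
    intro Q hQ
    simp [sympOmega]
  smul_mem' := by
    intro c a ha Q hQ
    rw [sympOmega_smul_left, ha Q hQ, mul_zero]

/-- The truncation map `πᵢ : V → V`, `(P₁,…,Pₙ) ↦ (P₁,…,Pᵢ,0,…,0)`. -/
def trunc (n i : ℕ) : PV n →ₗ[ZMod 2] PV n where
  toFun v := fun j => if (j : ℕ) < i then v j else 0
  map_add' := by
    intro a b
    funext j
    by_cases h : (j : ℕ) < i <;> simp [h]
  map_smul' := by
    intro c a
    funext j
    by_cases h : (j : ℕ) < i <;> simp [h]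

/-!
The state map `fᵢ` is `𝔽₂`-linear, so its nonempty fibers on `S^⊥` are cosets of its kernel
there, and `|S^⊥| = |fᵢ(S^⊥)| · |ker|`. Since the `Sⱼ` span `S`, `fᵢ(P) = 0` says exactly that
`πᵢ(P) ∈ S^⊥`; as `πᵢ` is idempotent, `P ↦ (πᵢ(P), P - πᵢ(P))` then splits the kernel
`{P ∈ S^⊥ : πᵢ(P) ∈ S^⊥}` as `Cᵢᵖ × Cᵢᶠ`.
-/

section Counting

variable {R M N : Type*} [Ring R] [AddCommGroup M] [AddCommGroup N] [Module R M] [Module R N]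

theorem LinearMap.card_fiber_eq_card_inf_ker (f : M →ₗ[R] N) {W : Submodule R M} {s : N}
    (hs : s ∈ f '' W) :
    Nat.card {x | x ∈ W ∧ f x = s} = Nat.card ↥(W ⊓ LinearMap.ker f) := by
  obtain ⟨x₀, hx₀, rfl⟩ := hs
  refine Nat.card_congr
    { toFun := fun x => ⟨x.1 - x₀, sub_mem x.2.1 hx₀, by simp [x.2.2]⟩
      invFun := fun y => ⟨y.1 + x₀, add_mem (Submodule.mem_inf.1 y.2).1 hx₀,
        by simpa using (Submodule.mem_inf.1 y.2).2⟩
      left_inv := fun x => Subtype.ext (sub_add_cancel x.1 x₀)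
      right_inv := fun y => Subtype.ext (add_sub_cancel_right y.1 x₀) }

theorem LinearMap.card_eq_card_image_mul_card_inf_ker (f : M →ₗ[R] N) (W : Submodule R M) :
    Nat.card W = Nat.card (f '' W) * Nat.card ↥(W ⊓ LinearMap.ker f) := by
  let g := (f.domRestrict W).toAddMonoidHom
  rw [← g.ker.card_mul_index, AddSubgroup.index_ker, mul_comm]
  congr 1
  · exact Nat.card_congr (Equiv.subtypeEquivRight fun y => by simp [g])
  · exact Nat.card_congr
      { toFun := fun x => ⟨x.1, x.1.2, x.2⟩
        invFun := fun y => ⟨⟨y.1, y.2.1⟩, y.2.2⟩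
        left_inv := fun x => rfl
        right_inv := fun y => rfl }

theorem card_inf_comap_of_isIdempotentElem {p : M →ₗ[R] M} (hp : IsIdempotentElem p)
    (W : Submodule R M) :
    Nat.card ↥(W ⊓ W.comap p) =
      Nat.card ↥(W ⊓ LinearMap.ker (LinearMap.id - p)) * Nat.card ↥(W ⊓ LinearMap.ker p) := by
  have hpp (x : M) : p (p x) = p x := LinearMap.congr_fun hp.eq x
  rw [← Nat.card_prod]
  refine Nat.card_congr
    { toFun := fun x => (⟨p x, (Submodule.mem_inf.1 x.2).2, by simp [hpp]⟩,
        ⟨x - p x, sub_mem (Submodule.mem_inf.1 x.2).1 (Submodule.mem_inf.1 x.2).2, by simp [hpp]⟩)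
      invFun := fun y => ⟨y.1 + y.2, ?_⟩
      left_inv := fun x => Subtype.ext (add_sub_cancel (p x) x)
      right_inv := fun y => ?_ }
  all_goals
    obtain ⟨⟨a, ha⟩, ⟨b, hb⟩⟩ := y
    simp only [Submodule.mem_inf, LinearMap.mem_ker, LinearMap.sub_apply, LinearMap.id_apply,
      sub_eq_zero] at ha hb
  · simp [← ha.2, hb.2, add_mem ha.1 hb.1, ha.1]
  · ext <;> simp [← ha.2, hb.2]

end Counting

section WolffStateMap

variable {n : ℕ}

theorem sympOmega_comm (v w : PV n) : sympOmega v w = sympOmega w v :=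
  Finset.sum_congr rfl fun _ _ => by ring

def sympOmegaBilin : PV n →ₗ[ZMod 2] PV n →ₗ[ZMod 2] ZMod 2 :=
  LinearMap.mk₂ (ZMod 2) sympOmega sympOmega_add_left sympOmega_smul_left
    (fun v w₁ w₂ => by simp only [sympOmega_comm v, sympOmega_add_left])
    (fun c v w => by simp only [sympOmega_comm v, sympOmega_smul_left, smul_eq_mul])

theorem mem_sPerp_span_iff {m : ℕ} (g : Fin m → PV n) (P : PV n) :
    P ∈ sPerp (Submodule.span (ZMod 2) (Set.range g)) ↔ ∀ j, sympOmega P (g j) = 0 := by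
  change (Submodule.span _ _ ≤ LinearMap.ker (sympOmegaBilin P)) ↔ _
  rw [Submodule.span_le, Set.range_subset_iff]
  rfl

def wolffStateMap {m : ℕ} (g : Fin m → PV n) (i : ℕ) : PV n →ₗ[ZMod 2] (Fin m → ZMod 2) :=
  LinearMap.pi fun j => sympOmegaBilin (g j) ∘ₗ trunc n i

theorem ker_wolffStateMap {m : ℕ} (g : Fin m → PV n) (i : ℕ) :
    LinearMap.ker (wolffStateMap g i) =
      (sPerp (Submodule.span (ZMod 2) (Set.range g))).comap (trunc n i) := by
  ext P
  simp only [LinearMap.mem_ker, Submodule.mem_comap, mem_sPerp_span_iff, sympOmega_comm _ (g _)]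
  exact funext_iff

theorem isIdempotentElem_trunc (i : ℕ) : IsIdempotentElem (trunc n i) := by
  refine LinearMap.ext fun P => funext fun j => ?_
  by_cases h : (j : ℕ) < i <;> simp [trunc, h]

end WolffStateMap

theorem wolff_state_map_fibers_general (n k : ℕ)
    (S : Submodule (ZMod 2) (PV n))
    (Sgen : Fin (n - k) → PV n)
    (hspan : Submodule.span (ZMod 2) (Set.range Sgen) = S)
    (i : ℕ) :
    (∀ s ∈ (fun (P : PV n) (j : Fin (n - k)) =>
          sympOmega (Sgen j) (trunc n i P)) '' (sPerp S : Set (PV n)),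
        Nat.card {P : PV n | P ∈ sPerp S ∧
            (fun j : Fin (n - k) => sympOmega (Sgen j) (trunc n i P)) = s}
          = Nat.card ↥(sPerp S ⊓ LinearMap.ker (LinearMap.id - trunc n i))
            * Nat.card ↥(sPerp S ⊓ LinearMap.ker (trunc n i))) ∧
    Nat.card (sPerp S)
      = Nat.card ((fun (P : PV n) (j : Fin (n - k)) =>
            sympOmega (Sgen j) (trunc n i P)) '' (sPerp S : Set (PV n)))
        * Nat.card ↥(sPerp S ⊓ LinearMap.ker (LinearMap.id - trunc n i))
        * Nat.card ↥(sPerp S ⊓ LinearMap.ker (trunc n i)) := by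
  have hker : Nat.card ↥(sPerp S ⊓ LinearMap.ker (wolffStateMap Sgen i)) =
      Nat.card ↥(sPerp S ⊓ LinearMap.ker (LinearMap.id - trunc n i))
        * Nat.card ↥(sPerp S ⊓ LinearMap.ker (trunc n i)) := by
    rw [ker_wolffStateMap, hspan]
    exact card_inf_comap_of_isIdempotentElem (isIdempotentElem_trunc i) _
  refine ⟨fun s hs => ?_, ?_⟩
  · rw [← hker]
    exact (wolffStateMap Sgen i).card_fiber_eq_card_inf_ker hs
  · rw [mul_assoc, ← hker]
    exact (wolffStateMap Sgen i).card_eq_card_image_mul_card_inf_ker _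

/-- Every nonempty fiber of the Wolff state map has the same size |Cᵢᵖ|·|Cᵢᶠ|;
consequently |S^⊥| = |fᵢ(S^⊥)| · |Cᵢᵖ| · |Cᵢᶠ|. -/
theorem wolff_state_map_fibers (n k : ℕ) (hk : k ≤ n)
    (S : Submodule (ZMod 2) (PV n))
    (Sgen : Fin (n - k) → PV n) (hind : LinearIndependent (ZMod 2) Sgen)
    (hspan : Submodule.span (ZMod 2) (Set.range Sgen) = S)
    (i : ℕ) (hi : i ≤ n) :
    (∀ s ∈ (fun (P : PV n) (j : Fin (n - k)) =>
          sympOmega (Sgen j) (trunc n i P)) '' (sPerp S : Set (PV n)),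
        Nat.card {P : PV n | P ∈ sPerp S ∧
            (fun j : Fin (n - k) => sympOmega (Sgen j) (trunc n i P)) = s}
          = Nat.card ↥(sPerp S ⊓ LinearMap.ker (LinearMap.id - trunc n i))
            * Nat.card ↥(sPerp S ⊓ LinearMap.ker (trunc n i))) ∧
    Nat.card (sPerp S)
      = Nat.card ((fun (P : PV n) (j : Fin (n - k)) =>
            sympOmega (Sgen j) (trunc n i P)) '' (sPerp S : Set (PV n)))
        * Nat.card ↥(sPerp S ⊓ LinearMap.ker (LinearMap.id - trunc n i))
        * Nat.card ↥(sPerp S ⊓ LinearMap.ker (trunc n i)) :=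
  wolff_state_map_fibers_general n k S Sgen hspan i
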